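/- arXiv:1207.3909 — 2 statements merged into one kernel-verified Lean document; each statement's English description precedes it below -/
import Mathlib

section
/- For integers s ≥ 2 and 1 ≤ j ≤ ⌊s/2⌋, the sum Q(s,j) = Σ_{1 ≤ i_1 < i_2 < ⋯ < i_j ≤ s, with 2 ≤ i_1, 4 ≤ i_2, …, 2j ≤ i_j} (i_1−1)(i_2−3)⋯(i_j−2j+1) equals s!/(2^j · (s−2j)! · j!). -/
/-!
Splitting the sum for `Q(s+1, j+1)` according to whether the last index `i_{j+1}` equals `s + 1`
gives the recursion `Q(s+1, j+1) = Q(s, j+1) + (s - 2j) Q(s, j)`: when `i_{j+1} = s + 1`, its factor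
is `s - 2j` and the remaining indices form an arbitrary admissible `j`-tuple in `[1, s]`. The number
`C(s, 2j) (2j-1)!!` of ways to pick `j` disjoint pairs from `s` points satisfies the same recursion
(pair the new point with one of the `s - 2j` points left unpaired, or leave it unpaired), and it
equals `s! / (2^j (s-2j)! j!)`.
-/

open Finset Nat

theorem Fin.strictMono_snoc {α : Type*} [Preorder α] {n : ℕ} {f : Fin n → α} {a : α}
    (hf : StrictMono f) (ha : ∀ m, f m < a) : StrictMono (Fin.snoc f a : Fin (n + 1) → α) := by
  intro x y hxy
  obtain ⟨x, rfl⟩ := Fin.exists_castSucc_eq.2 (hxy.trans_le (Fin.le_last y)).ne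
  induction y using Fin.lastCases with
  | last => simpa using ha x
  | cast y => simpa using hf (Fin.castSucc_lt_castSucc_iff.1 hxy)

-- `(2 * 0 - 1)‼ = 0‼ = 1`, so truncated subtraction is harmless at `j = 0`.
def pairingCount (s j : ℕ) : ℕ := s.choose (2 * j) * (2 * j - 1)‼

theorem pairingCount_zero_right (s : ℕ) : pairingCount s 0 = 1 := by
  simp [pairingCount]

theorem pairingCount_zero_left (j : ℕ) : pairingCount 0 (j + 1) = 0 := by
  rw [pairingCount, choose_eq_zero_of_lt (by omega), zero_mul]

theorem pairingCount_succ_succ (s j : ℕ) :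
    pairingCount (s + 1) (j + 1) = pairingCount s (j + 1) + (s - 2 * j) * pairingCount s j := by
  have hodd : (2 * j + 1)‼ = (2 * j + 1) * (2 * j - 1)‼ := doubleFactorial_add_one (2 * j)
  have hchoose : s.choose (2 * j) * (s - 2 * j) = s.choose (2 * j + 1) * (2 * j + 1) :=
    (choose_succ_right_eq s (2 * j)).symm
  simp only [pairingCount, show 2 * (j + 1) = 2 * j + 1 + 1 by ring, Nat.add_sub_cancel,
    choose_succ_succ]
  calc (s.choose (2 * j + 1) + s.choose (2 * j + 1 + 1)) * (2 * j + 1)‼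
      = s.choose (2 * j + 1 + 1) * (2 * j + 1)‼
          + s.choose (2 * j + 1) * (2 * j + 1) * (2 * j - 1)‼ := by
        rw [hodd]; ring
    _ = _ := by rw [← hchoose]; ring

theorem factorial_two_mul (j : ℕ) : (2 * j)! = 2 ^ j * j ! * (2 * j - 1)‼ := by
  cases j with
  | zero => rfl
  | succ k =>
    rw [← doubleFactorial_two_mul, show 2 * (k + 1) = 2 * k + 1 + 1 by ring,
      factorial_eq_mul_doubleFactorial, Nat.add_sub_cancel]

theorem pairingCount_mul_factorials {s j : ℕ} (h : 2 * j ≤ s) :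
    pairingCount s j * (2 ^ j * (s - 2 * j)! * j !) = s ! := by
  rw [← choose_mul_factorial_mul_factorial h, factorial_two_mul, pairingCount]
  ring

-- Indices are 0-based: `m : Fin j` stands for `m + 1`, and `i m ≥ 2 (m + 1)` already excludes `0`.
def admissibleTuples (s j : ℕ) : Finset (Fin j → Fin (s + 1)) :=
  univ.filter fun i => StrictMono i ∧ ∀ m : Fin j, 2 * ((m : ℕ) + 1) ≤ (i m : ℕ)

def Q (s j : ℕ) : ℚ :=
  ∑ i ∈ admissibleTuples s j, ∏ m : Fin j, ((i m : ℚ) - (2 * (m : ℕ) + 1))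

theorem mem_admissibleTuples {s j : ℕ} {i : Fin j → Fin (s + 1)} :
    i ∈ admissibleTuples s j ↔ StrictMono i ∧ ∀ m : Fin j, 2 * ((m : ℕ) + 1) ≤ (i m : ℕ) := by
  simp [admissibleTuples]

theorem Q_zero_right (s : ℕ) : Q s 0 = 1 := by
  have : admissibleTuples s 0 = univ :=
    eq_univ_of_forall fun i => mem_admissibleTuples.2 ⟨fun a => a.elim0, fun m => m.elim0⟩
  simp [Q, this]

theorem admissibleTuples_eq_empty {s j : ℕ} (h : s < 2 * j) : admissibleTuples s j = ∅ := by
  refine eq_empty_of_forall_notMem fun i hi => ?_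
  obtain ⟨k, rfl⟩ : ∃ k, j = k + 1 := ⟨j - 1, by omega⟩
  have hbound := (mem_admissibleTuples.1 hi).2 (Fin.last k)
  have hlt := (i (Fin.last k)).isLt
  rw [Fin.val_last] at hbound
  omega

theorem Q_eq_zero {s j : ℕ} (h : s < 2 * j) : Q s j = 0 := by
  simp [Q, admissibleTuples_eq_empty h]

theorem sum_admissibleTuples_last_ne (s j : ℕ) :
    ∑ i ∈ (admissibleTuples (s + 1) (j + 1)).filter (fun i => i (Fin.last j) ≠ Fin.last (s + 1)),
      ∏ m : Fin (j + 1), ((i m : ℚ) - (2 * (m : ℕ) + 1)) = Q s (j + 1) := by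
  have ne_last {i : Fin (j + 1) → Fin (s + 2)} (hi : i ∈ (admissibleTuples (s + 1) (j + 1)).filter
      (fun i => i (Fin.last j) ≠ Fin.last (s + 1))) (m : Fin (j + 1)) : i m ≠ Fin.last (s + 1) := by
    rw [mem_filter, mem_admissibleTuples] at hi
    exact ((hi.1.1.monotone (Fin.le_last m)).trans_lt (Fin.lt_last_iff_ne_last.2 hi.2)).ne
  refine sum_bij' (fun i hi m => (i m).castPred (ne_last hi m)) (fun g _ m => (g m).castSucc)
    ?_ ?_ ?_ ?_ ?_
  · intro i hi
    have hi' := mem_admissibleTuples.1 (mem_filter.1 hi).1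
    exact mem_admissibleTuples.2
      ⟨Fin.strictMono_castPred_comp (ne_last hi) hi'.1, by simpa using hi'.2⟩
  · intro g hg
    rw [mem_admissibleTuples] at hg
    exact mem_filter.2 ⟨mem_admissibleTuples.2
      ⟨Fin.strictMono_castSucc.comp hg.1, by simpa using hg.2⟩, (Fin.castSucc_lt_last _).ne⟩
  · simp
  · simp
  · simp

theorem sum_admissibleTuples_last_eq {s j : ℕ} (h : 2 * j + 1 ≤ s) :
    ∑ i ∈ (admissibleTuples (s + 1) (j + 1)).filter (fun i => i (Fin.last j) = Fin.last (s + 1)),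
      ∏ m : Fin (j + 1), ((i m : ℚ) - (2 * (m : ℕ) + 1)) = (s - 2 * j : ℕ) * Q s j := by
  have ne_last {i : Fin (j + 1) → Fin (s + 2)} (hi : i ∈ (admissibleTuples (s + 1) (j + 1)).filter
      (fun i => i (Fin.last j) = Fin.last (s + 1))) (m : Fin j) :
      i m.castSucc ≠ Fin.last (s + 1) := by
    rw [mem_filter, mem_admissibleTuples] at hi
    exact (hi.2 ▸ hi.1.1 (Fin.castSucc_lt_last m)).ne
  rw [Q, mul_sum]
  refine sum_bij' (fun i hi m => (i m.castSucc).castPred (ne_last hi m))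
    (fun g _ => Fin.snoc (fun m => (g m).castSucc) (Fin.last (s + 1))) ?_ ?_ ?_ ?_ ?_
  · intro i hi
    have hi' := mem_admissibleTuples.1 (mem_filter.1 hi).1
    exact mem_admissibleTuples.2 ⟨Fin.strictMono_castPred_comp (ne_last hi)
      (hi'.1.comp Fin.strictMono_castSucc), fun m => by simpa using hi'.2 m.castSucc⟩
  · intro g hg
    rw [mem_admissibleTuples] at hg
    refine mem_filter.2 ⟨mem_admissibleTuples.2 ⟨Fin.strictMono_snoc
      (Fin.strictMono_castSucc.comp hg.1) fun m => Fin.castSucc_lt_last _, fun m => ?_⟩, by simp⟩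
    induction m using Fin.lastCases with
    | last => simp; omega
    | cast m => simpa using hg.2 m
  · intro i hi
    funext m
    induction m using Fin.lastCases with
    | last => simpa using (mem_filter.1 hi).2.symm
    | cast m => simp
  · simp
  · intro i hi
    rw [Fin.prod_univ_castSucc, (mem_filter.1 hi).2]
    push_cast [Nat.cast_sub (by omega : 2 * j ≤ s)]
    simp only [Fin.coe_castPred, Fin.val_castSucc]
    ring

theorem Q_succ_succ (s j : ℕ) : Q (s + 1) (j + 1) = Q s (j + 1) + (s - 2 * j : ℕ) * Q s j := by
  by_cases h : 2 * j + 1 ≤ s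
  · rw [Q, ← sum_filter_add_sum_filter_not _ (fun i => i (Fin.last j) = Fin.last (s + 1)),
      sum_admissibleTuples_last_eq h, sum_admissibleTuples_last_ne, add_comm]
  · rw [Q_eq_zero (by omega), Q_eq_zero (by omega), Nat.sub_eq_zero_of_le (by omega)]
    simp

theorem Q_eq_pairingCount (s j : ℕ) : Q s j = pairingCount s j := by
  induction j generalizing s with
  | zero => simp [Q_zero_right, pairingCount_zero_right]
  | succ j ihj =>
    induction s with
    | zero => simp [Q_eq_zero, pairingCount_zero_left]
    | succ s ihs => simp [Q_succ_succ, pairingCount_succ_succ, ihs, ihj]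

theorem stmt_0_general (s j : ℕ) (hj2 : j ≤ s / 2) :
    (∑ i ∈ Finset.univ.filter
        (fun i : Fin j → Fin (s + 1) =>
          StrictMono i ∧ ∀ m : Fin j, 2 * ((m : ℕ) + 1) ≤ (i m : ℕ) ∧ 1 ≤ (i m : ℕ)),
      ∏ m : Fin j, ((i m : ℚ) - (2 * (m : ℕ) + 1))) =
    (Nat.factorial s : ℚ) / (2 ^ j * Nat.factorial (s - 2 * j) * Nat.factorial j) := by
  have hadm : Finset.univ.filter (fun i : Fin j → Fin (s + 1) =>
      StrictMono i ∧ ∀ m : Fin j, 2 * ((m : ℕ) + 1) ≤ (i m : ℕ) ∧ 1 ≤ (i m : ℕ)) =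
      admissibleTuples s j :=
    filter_congr fun i _ => and_congr_right fun _ => forall_congr' fun m =>
      and_iff_left_of_imp fun h => by omega
  rw [hadm, ← Q, Q_eq_pairingCount, eq_div_iff (by positivity)]
  exact_mod_cast pairingCount_mul_factorials (by omega)

theorem stmt_0 (s j : ℕ) (hs : 2 ≤ s) (hj1 : 1 ≤ j) (hj2 : j ≤ s / 2) :
    (∑ i ∈ Finset.univ.filter
        (fun i : Fin j → Fin (s + 1) =>
          StrictMono i ∧ ∀ m : Fin j, 2 * ((m : ℕ) + 1) ≤ (i m : ℕ) ∧ 1 ≤ (i m : ℕ)),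
      ∏ m : Fin j, ((i m : ℚ) - (2 * (m : ℕ) + 1))) =
    (Nat.factorial s : ℚ) / (2 ^ j * Nat.factorial (s - 2 * j) * Nat.factorial j) :=
  stmt_0_general s j hj2
end

section
/- Let D be the differential operator 2·y_2·∂/∂y_0 − y_0·∂/∂y_1 on the polynomial ring ℂ[y_0,y_1,y_2]. Then for n ≥ 1 and 0 ≤ s ≤ 2n, D^s(y_1^n) = Σ_{j=max{0,s−n}}^{⌊s/2⌋} c_j^{(s,n)} · y_0^{s−2j} y_1^{n−s+j} y_2^{j}, where c_j^{(s,n)} = (−1)^{s−j} · s!·n! / ((s−2j)!·(n−s+j)!·j!). -/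
open MvPolynomial

/-- The derivation `D = 2 y₂ ∂/∂y₀ − y₀ ∂/∂y₁` on `ℂ[y₀,y₁,y₂]`. -/
noncomputable def Dop : MvPolynomial (Fin 3) ℂ → MvPolynomial (Fin 3) ℂ :=
  fun p => 2 * X 2 * pderiv 0 p - X 0 * pderiv 1 p

/-!
`D` is a locally nilpotent derivation with `D y₁ = -y₀`, `D y₀ = 2 y₂`, `D y₂ = 0`, so
`exp (t D) y₁ = y₁ - t y₀ - t² y₂` and `∑ₛ Dˢ(y₁ⁿ) tˢ / s! = (y₁ - t y₀ - t² y₂)ⁿ`; the formula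
is `s!` times the coefficient of `tˢ` given by the trinomial theorem.

The exponential is never formed: applying `D` coefficientwise to `F = y₁ - t y₀ - t² y₂` gives
`dF/dt`, two derivations of `ℂ[y₀,y₁,y₂][t]` that therefore also agree on `Fⁿ`. On coefficients
this reads `D (Fⁿ)ₛ = (s + 1) (Fⁿ)ₛ₊₁`, whence `Dˢ (Fⁿ)₀ = s! (Fⁿ)ₛ`.
-/

open scoped Polynomial

lemma iterate_apply_eq_factorial_nsmul {M : Type*} [AddMonoid M] (f : M →+ M) (g : ℕ → M)
    (hg : ∀ s, f (g s) = (s + 1) • g (s + 1)) (s : ℕ) : f^[s] (g 0) = s.factorial • g s := by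
  induction s with
  | zero => simp
  | succ s ih =>
    rw [Function.iterate_succ_apply', ih, map_nsmul, hg, smul_smul, Nat.factorial_succ, mul_comm]

namespace Derivation

variable {R A : Type*} [CommRing R] [CommRing A] [Algebra R A]

lemma apply_pow_eq_of_apply_eq {M : Type*} [AddCommMonoid M] [Module A M] [Module R M]
    {D₁ D₂ : Derivation R A M} {a : A} (h : D₁ a = D₂ a) (n : ℕ) : D₁ (a ^ n) = D₂ (a ^ n) := by
  simp only [leibniz_pow, h]

noncomputable def coeffwise (d : Derivation R A A) : Derivation R A[X] A[X] :=
  PolynomialModule.equivPolynomialSelf.compDer d.mapCoeffs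

@[simp]
lemma coeff_coeffwise (d : Derivation R A A) (p : A[X]) (i : ℕ) :
    (d.coeffwise p).coeff i = d (p.coeff i) := rfl

@[simp]
lemma coeffwise_C (d : Derivation R A A) (a : A) : d.coeffwise (.C a) = .C (d a) := by
  ext i; cases i <;> simp [Polynomial.coeff_C]

@[simp]
lemma coeffwise_X (d : Derivation R A A) : d.coeffwise (.X : A[X]) = 0 := by
  ext i; simp [Polynomial.coeff_X, apply_ite d]

lemma coeffwise_pow_of_eq_derivative (d : Derivation R A A) {p : A[X]}
    (hp : d.coeffwise p = Polynomial.derivative p) (n : ℕ) :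
    d.coeffwise (p ^ n) = Polynomial.derivative (p ^ n) :=
  apply_pow_eq_of_apply_eq (D₁ := d.coeffwise) (D₂ := Polynomial.derivative'.restrictScalars R)
    hp n

lemma iterate_coeff_zero_eq_factorial_nsmul (d : Derivation R A A) {p : A[X]}
    (hp : d.coeffwise p = Polynomial.derivative p) (s : ℕ) :
    d^[s] (p.coeff 0) = s.factorial • p.coeff s :=
  iterate_apply_eq_factorial_nsmul d.toAddMonoidHom p.coeff (fun s => by
    change d (p.coeff s) = _
    rw [← coeff_coeffwise, hp, Polynomial.coeff_derivative, nsmul_eq_mul', Nat.cast_succ]) s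

end Derivation

namespace Polynomial

lemma trinomial_pow_eq_sum {A : Type*} [CommSemiring A] (a b c : A) (n : ℕ) :
    (C a + X * C b + X ^ 2 * C c) ^ n = ∑ m ∈ Finset.range (n + 1), ∑ i ∈ Finset.range (m + 1),
      C ((n.choose m * m.choose i : A) * a ^ (n - m) * b ^ (m - i) * c ^ i) * X ^ (m + i) := by
  rw [show C a + X * C b + X ^ 2 * C c = X * (X * C c + C b) + C a by ring, add_pow]
  refine Finset.sum_congr rfl fun m _ => ?_
  rw [mul_pow, add_pow, Finset.mul_sum, Finset.sum_mul, Finset.sum_mul]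
  refine Finset.sum_congr rfl fun i _ => ?_
  simp only [map_mul, map_pow, map_natCast]
  ring

lemma coeff_trinomial_pow {A : Type*} [CommSemiring A] (a b c : A) (n s : ℕ) :
    ((C a + X * C b + X ^ 2 * C c) ^ n).coeff s = ∑ j ∈ Finset.Icc (s - n) (s / 2),
      (n.choose (s - j) * (s - j).choose j : A) * a ^ (n + j - s) * b ^ (s - 2 * j) * c ^ j := by
  simp only [trinomial_pow_eq_sum, finsetSum_coeff, coeff_C_mul_X_pow]
  rw [Finset.sum_sigma', ← Finset.sum_filter]
  refine Finset.sum_nbij' (fun x => x.2) (fun j => ⟨s - j, j⟩) ?_ ?_ ?_ (fun _ _ => rfl) ?_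
  · intro x hx
    simp only [Finset.mem_filter, Finset.mem_sigma, Finset.mem_range, Finset.mem_Icc] at hx ⊢
    omega
  · intro j hj
    simp only [Finset.mem_filter, Finset.mem_sigma, Finset.mem_range, Finset.mem_Icc] at hj ⊢
    omega
  · rintro ⟨m, i⟩ hx
    simp only [Finset.mem_filter, Finset.mem_sigma, Finset.mem_range] at hx
    obtain rfl : m = s - i := by omega
    rfl
  · rintro ⟨m, i⟩ hx
    simp only [Finset.mem_filter, Finset.mem_sigma, Finset.mem_range] at hx
    obtain rfl : s = m + i := hx.2
    rw [Nat.add_sub_cancel, Nat.add_sub_add_right, show m + i - 2 * i = m - i by omega]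

end Polynomial

lemma factorial_mul_choose_mul_choose {K : Type*} [Field K] [CharZero K] {n s j : ℕ}
    (h₁ : s ≤ n + j) (h₂ : 2 * j ≤ s) :
    (s.factorial * (n.choose (s - j) * (s - j).choose j) : K) =
      s.factorial * n.factorial /
        ((s - 2 * j).factorial * (n + j - s).factorial * j.factorial) := by
  rw [Nat.cast_choose K (show s - j ≤ n by omega), Nat.cast_choose K (show j ≤ s - j by omega),
    show n - (s - j) = n + j - s by omega, show s - j - j = s - 2 * j by omega]
  have : ((s - j).factorial : K) ≠ 0 := Nat.cast_ne_zero.mpr (Nat.factorial_ne_zero _)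
  field_simp

local notation "𝓡" => MvPolynomial (Fin 3) ℂ

noncomputable def dopDerivation : Derivation ℂ 𝓡 𝓡 :=
  (2 * X 2 : 𝓡) • pderiv 0 - (X 0 : 𝓡) • pderiv 1

lemma coe_dopDerivation : ⇑dopDerivation = Dop := by
  funext p
  simp [dopDerivation, Dop, mul_assoc]

noncomputable def dopFlow : Polynomial 𝓡 :=
  .C (X 1) + .X * .C (-X 0) + .X ^ 2 * .C (-X 2)

lemma coeffwise_dopFlow : dopDerivation.coeffwise dopFlow = Polynomial.derivative dopFlow := by
  simp [dopFlow, dopDerivation, map_ofNat Polynomial.C 2]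
  ring

lemma coeff_zero_dopFlow_pow (n : ℕ) : (dopFlow ^ n).coeff 0 = X 1 ^ n := by
  simp [Polynomial.coeff_zero_eq_eval_zero, dopFlow]

lemma iterate_dop_X_one_pow (n s : ℕ) :
    Dop^[s] (X 1 ^ n) = s.factorial • (dopFlow ^ n).coeff s := by
  rw [← coe_dopDerivation, ← coeff_zero_dopFlow_pow]
  exact dopDerivation.iterate_coeff_zero_eq_factorial_nsmul
    (dopDerivation.coeffwise_pow_of_eq_derivative coeffwise_dopFlow n) s

theorem stmt_2_general (n s : ℕ) :
    Dop^[s] (X 1 ^ n) =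
    ∑ j ∈ Finset.Icc (s - n) (s / 2),
      C ((-1) ^ (s - j) * (Nat.factorial s * Nat.factorial n : ℂ) /
        (Nat.factorial (s - 2 * j) * Nat.factorial (n + j - s) * Nat.factorial j)) *
      X 0 ^ (s - 2 * j) * X 1 ^ (n + j - s) * X 2 ^ j := by
  rw [iterate_dop_X_one_pow, dopFlow, Polynomial.coeff_trinomial_pow, Finset.smul_sum]
  refine Finset.sum_congr rfl fun j hj => ?_
  rw [Finset.mem_Icc] at hj
  rw [mul_div_assoc, ← factorial_mul_choose_mul_choose (by omega) (by omega),
    show s - j = s - 2 * j + j by omega, pow_add]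
  simp only [map_mul, map_pow, map_neg, map_one, map_natCast, neg_pow (X 0 : 𝓡),
    neg_pow (X 2 : 𝓡), nsmul_eq_mul]
  ring

theorem stmt_2 (n s : ℕ) (hn : 1 ≤ n) (hs : s ≤ 2 * n) :
    Dop^[s] (X 1 ^ n) =
    ∑ j ∈ Finset.Icc (s - n) (s / 2),
      C ((-1) ^ (s - j) * (Nat.factorial s * Nat.factorial n : ℂ) /
        (Nat.factorial (s - 2 * j) * Nat.factorial (n + j - s) * Nat.factorial j)) *
      X 0 ^ (s - 2 * j) * X 1 ^ (n + j - s) * X 2 ^ j :=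
  stmt_2_general n s
end
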